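/- Let G be a finite simple graph with n vertices and at least one edge, with Laplacian eigenvalues μ_1 ≥ μ_2 ≥ … ≥ μ_n = 0. Let S ⊆ V(G), and let X and Y be disjoint nonempty vertex subsets with X ∪ Y = V(G)∖S such that no edge of G joins a vertex of X to a vertex of Y and |X| ≤ |Y|. Then (μ_1 − μ_{n-1})·|S| ≥ 2·μ_{n-1}·|X|. -/

import Mathlib

set_option maxHeartbeats 4000000

open Matrix Finset

variable {n : ℕ}

open Matrix Finset

variable {n : ℕ}

lemma star_coe_eigU (A : Matrix (Fin n) (Fin n) ℝ) (hA : A.IsHermitian) :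
    star (hA.eigenvectorUnitary : Matrix (Fin n) (Fin n) ℝ)
      = (hA.eigenvectorUnitary : Matrix (Fin n) (Fin n) ℝ)ᵀ := by
  simp [star, Matrix.conjTranspose]

lemma quad_expand (A : Matrix (Fin n) (Fin n) ℝ) (hA : A.IsHermitian) (v : Fin n → ℝ) :
    v ⬝ᵥ (A *ᵥ v) =
      ∑ i, hA.eigenvalues i * (((hA.eigenvectorUnitary : Matrix (Fin n) (Fin n) ℝ)ᵀ *ᵥ v) i)^2 := by
  set U : Matrix (Fin n) (Fin n) ℝ := (hA.eigenvectorUnitary : Matrix (Fin n) (Fin n) ℝ) with hU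
  have hsp := hA.spectral_theorem
  simp only [Unitary.conjStarAlgAut_apply, Unitary.coe_star, ← hU] at hsp
  have h1 : A *ᵥ v = U *ᵥ (Matrix.diagonal (RCLike.ofReal ∘ hA.eigenvalues) *ᵥ (Uᵀ *ᵥ v)) := by
    conv_lhs => rw [hsp, star_coe_eigU A hA, ← hU]
    simp [Matrix.mulVec_mulVec, Matrix.mul_assoc]
  rw [h1, Matrix.dotProduct_mulVec, Matrix.mulVec_transpose]
  simp [dotProduct, Matrix.mulVec_diagonal, RCLike.ofReal_real_eq_id]
  exact Finset.sum_congr rfl fun i _ => by ring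

lemma norm_expand (A : Matrix (Fin n) (Fin n) ℝ) (hA : A.IsHermitian) (v : Fin n → ℝ) :
    v ⬝ᵥ v = ∑ i, (((hA.eigenvectorUnitary : Matrix (Fin n) (Fin n) ℝ)ᵀ *ᵥ v) i)^2 := by
  set U : Matrix (Fin n) (Fin n) ℝ := (hA.eigenvectorUnitary : Matrix (Fin n) (Fin n) ℝ) with hU
  have hUU : U * Uᵀ = 1 := by
    rw [← star_coe_eigU A hA, ← hU]
    exact (Matrix.mem_unitaryGroup_iff).mp hA.eigenvectorUnitary.2
  have h : v ⬝ᵥ v = v ⬝ᵥ ((U * Uᵀ) *ᵥ v) := by rw [hUU]; simp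
  rw [h, ← Matrix.mulVec_mulVec, Matrix.dotProduct_mulVec, Matrix.mulVec_transpose]
  simp [dotProduct]
  exact Finset.sum_congr rfl fun i _ => by ring

lemma ray_upper (A : Matrix (Fin n) (Fin n) ℝ) (hA : A.IsHermitian) (mx : ℝ)
    (hmx : ∀ i, hA.eigenvalues i ≤ mx) (v : Fin n → ℝ) :
    v ⬝ᵥ (A *ᵥ v) ≤ mx * (v ⬝ᵥ v) := by
  rw [quad_expand A hA v, norm_expand A hA v, Finset.mul_sum]
  exact Finset.sum_le_sum fun i _ => mul_le_mul_of_nonneg_right (hmx i) (sq_nonneg _)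

/-- Rayleigh lower bound for vectors orthogonal to the all-ones vector, when the all-ones
vector is in the kernel and all eigenvalues except one (equal to zero) are `≥ τ ≥ 0`. -/
lemma ray_lower (A : Matrix (Fin n) (Fin n) ℝ) (hA : A.IsHermitian) (τ : ℝ) (i0 : Fin n)
    (hτ : 0 ≤ τ) (hi0 : hA.eigenvalues i0 = 0)
    (hother : ∀ i, i ≠ i0 → τ ≤ hA.eigenvalues i)
    (hker : A *ᵥ (fun _ => (1:ℝ)) = 0)
    (v : Fin n → ℝ) (hv : ∑ j, v j = 0) :
    τ * (v ⬝ᵥ v) ≤ v ⬝ᵥ (A *ᵥ v) := by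
  rcases eq_or_lt_of_le hτ with h0 | hτpos
  · -- τ = 0 : positive semidefiniteness-style bound
    rw [quad_expand A hA v, norm_expand A hA v, ← h0, zero_mul]
    apply Finset.sum_nonneg
    intro i _
    rcases eq_or_ne i i0 with rfl | hne
    · rw [hi0]; simp
    · exact mul_nonneg (le_trans hτ (hother i hne)) (sq_nonneg _)
  · set U : Matrix (Fin n) (Fin n) ℝ := (hA.eigenvectorUnitary : Matrix (Fin n) (Fin n) ℝ) with hU
    set w : Fin n → ℝ := Uᵀ *ᵥ v with hw
    -- the key: w i0 = 0
    have hstar : star U = Uᵀ := star_coe_eigU A hA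
    have hUtU : Uᵀ * U = 1 := by
      rw [← hstar]; exact hA.eigenvectorUnitary.2.1
    have hUUt : U * Uᵀ = 1 := by
      rw [← hstar]; exact (Matrix.mem_unitaryGroup_iff).mp hA.eigenvectorUnitary.2
    have hsp := hA.spectral_theorem
    simp only [Unitary.conjStarAlgAut_apply, Unitary.coe_star, ← hU, hstar] at hsp
    set o : Fin n → ℝ := fun _ => (1:ℝ) with ho
    set z : Fin n → ℝ := Uᵀ *ᵥ o with hz
    have hDz : Matrix.diagonal (RCLike.ofReal ∘ hA.eigenvalues) *ᵥ z = 0 := by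
      have h1 : Uᵀ *ᵥ (A *ᵥ o) = 0 := by rw [hker]; simp
      have h2 : Uᵀ *ᵥ (A *ᵥ o) = Matrix.diagonal (RCLike.ofReal ∘ hA.eigenvalues) *ᵥ z := by
        conv_lhs => rw [Matrix.mulVec_mulVec]
        have heq : Uᵀ * A = Matrix.diagonal (RCLike.ofReal ∘ hA.eigenvalues) * Uᵀ := by
          conv_lhs => rw [hsp]
          rw [← Matrix.mul_assoc, ← Matrix.mul_assoc, hUtU, Matrix.one_mul]
        conv_lhs => rw [heq]
        rw [← Matrix.mulVec_mulVec, hz]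
      rw [← h2, h1]
    have hzi : ∀ i, i ≠ i0 → z i = 0 := by
      intro i hne
      have := congrFun hDz i
      rw [Matrix.mulVec_diagonal] at this
      simp only [Function.comp, RCLike.ofReal_real_eq_id, id] at this
      have hpos : 0 < hA.eigenvalues i := lt_of_lt_of_le hτpos (hother i hne)
      have := (mul_eq_zero.mp this).resolve_left (ne_of_gt hpos)
      simpa using this
    have hoz : o = U *ᵥ z := by
      rw [hz, Matrix.mulVec_mulVec, hUUt]; simp
    have hzi0 : z i0 ≠ 0 := by
      intro h
      have : o i0 = 0 := by
        rw [hoz]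
        simp only [Matrix.mulVec, dotProduct]
        apply Finset.sum_eq_zero
        intro i _
        rcases eq_or_ne i i0 with rfl | hne
        · rw [h, mul_zero]
        · rw [hzi i hne, mul_zero]
      simp [ho] at this
    have hwi0 : w i0 = 0 := by
      have hsum : z i0 * w i0 = ∑ j, o j * v j := by
        have : ∀ j, o j = U j i0 * z i0 := by
          intro j
          conv_lhs => rw [hoz]
          simp only [Matrix.mulVec, dotProduct]
          rw [Finset.sum_eq_single i0]
          · intro i _ hne; rw [hzi i hne, mul_zero]
          · intro h; exact absurd (Finset.mem_univ i0) h
        calc z i0 * w i0 = z i0 * ∑ j, U j i0 * v j := by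
              rw [hw]; simp only [Matrix.mulVec, dotProduct, Matrix.transpose_apply]
            _ = ∑ j, (U j i0 * z i0) * v j := by rw [Finset.mul_sum]; exact Finset.sum_congr rfl fun j _ => by ring
            _ = ∑ j, o j * v j := Finset.sum_congr rfl fun j _ => by rw [← this j]
      have : z i0 * w i0 = 0 := by
        rw [hsum]
        simp only [ho, one_mul]
        exact hv
      exact (mul_eq_zero.mp this).resolve_left hzi0
    rw [quad_expand A hA v, norm_expand A hA v, Finset.mul_sum]
    apply Finset.sum_le_sum
    intro i _
    rcases eq_or_ne i i0 with rfl | hne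
    · rw [← hw, hwi0]
      simp
    · exact mul_le_mul_of_nonneg_right (hother i hne) (sq_nonneg _)


lemma pencil (N1 N2 G11 G22 G12 t u s a : ℝ) (hN1 : 0 < N1) (hN2 : 0 < N2)
    (ha : 0 < a) (hs : 0 < s) (ht : 0 ≤ t)
    (hlow : ∀ α β : ℝ, t*(α^2*N1 + β^2*N2) ≤ G11*α^2 + 2*G12*α*β + G22*β^2)
    (hup : ∀ α β : ℝ, G11*α^2 + 2*G12*α*β + G22*β^2 ≤ u*(α^2*N1 + β^2*N2))
    (hcrux2 : a^2*(G11*N2+G22*N1)^2 ≤ ((G11*N2-G22*N1)^2+4*G12^2*N1*N2)*(s+a)^2) :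
    2*t*a ≤ (u - t)*s := by
  set T : ℝ := G11*N2 + G22*N1 with hT
  set DD : ℝ := (G11*N2 - G22*N1)^2 + 4*G12^2*N1*N2 with hDD
  have hDDnn : 0 ≤ DD := by
    have := mul_nonneg (mul_nonneg (by positivity : (0:ℝ) ≤ 4*G12^2) hN1.le) hN2.le
    have := sq_nonneg (G11*N2 - G22*N1)
    rw [hDD]; nlinarith
  set D : ℝ := Real.sqrt DD with hDdef
  have hDsq : D^2 = DD := Real.sq_sqrt hDDnn
  have hD0 : (0:ℝ) ≤ D := Real.sqrt_nonneg _
  have hmax : T + D ≤ 2*u*N1*N2 := by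
    by_cases hdeg : N1*(2*G12*N2)^2 + N2*((G22*N1 - G11*N2) + D)^2 = 0
    · have h2 : ((G22*N1 - G11*N2) + D)^2 = 0 := by
        nlinarith [sq_nonneg (2*G12*N2), sq_nonneg ((G22*N1 - G11*N2) + D), hN1, hN2]
      have h2' : (G22*N1 - G11*N2) + D = 0 := by nlinarith [sq_nonneg ((G22*N1 - G11*N2) + D)]
      have h10 := hup 1 0
      nlinarith [h10, hN2, mul_pos hN1 hN2]
    · have hKnn : (0:ℝ) ≤ N1*(2*G12*N2)^2 + N2*((G22*N1 - G11*N2) + D)^2 :=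
        add_nonneg (mul_nonneg hN1.le (sq_nonneg _)) (mul_nonneg hN2.le (sq_nonneg _))
      have hKpos := lt_of_le_of_ne hKnn (Ne.symm hdeg)
      have hinst := hup (2*G12*N2) ((G22*N1 - G11*N2) + D)
      have hid : 2*N1*N2*(G11*(2*G12*N2)^2 + 2*G12*(2*G12*N2)*((G22*N1 - G11*N2) + D)
            + G22*((G22*N1 - G11*N2) + D)^2)
          = (T + D)*(N1*(2*G12*N2)^2 + N2*((G22*N1 - G11*N2) + D)^2) := by
        rw [hT]
        linear_combination (N2*(G11*N2 - G22*N1 - D)) * hDsq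
      have hscaled := mul_le_mul_of_nonneg_left hinst (le_of_lt (by positivity : (0:ℝ) < 2*N1*N2))
      have h3 : (T + D)*(N1*(2*G12*N2)^2 + N2*((G22*N1 - G11*N2) + D)^2)
          ≤ (2*u*N1*N2)*(N1*(2*G12*N2)^2 + N2*((G22*N1 - G11*N2) + D)^2) := by
        nlinarith [hscaled, hid]
      exact (mul_le_mul_iff_left₀ hKpos).mp h3
  have hmin : 2*t*N1*N2 ≤ T - D := by
    by_cases hdeg : N1*(2*G12*N2)^2 + N2*((G22*N1 - G11*N2) - D)^2 = 0
    · have h2 : ((G22*N1 - G11*N2) - D)^2 = 0 := by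
        nlinarith [sq_nonneg (2*G12*N2), sq_nonneg ((G22*N1 - G11*N2) - D), hN1, hN2]
      have h2' : (G22*N1 - G11*N2) - D = 0 := by nlinarith [sq_nonneg ((G22*N1 - G11*N2) - D)]
      have h10 := hlow 1 0
      nlinarith [h10, hN2, mul_pos hN1 hN2]
    · have hKnn : (0:ℝ) ≤ N1*(2*G12*N2)^2 + N2*((G22*N1 - G11*N2) - D)^2 :=
        add_nonneg (mul_nonneg hN1.le (sq_nonneg _)) (mul_nonneg hN2.le (sq_nonneg _))
      have hKpos := lt_of_le_of_ne hKnn (Ne.symm hdeg)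
      have hinst := hlow (2*G12*N2) ((G22*N1 - G11*N2) - D)
      have hid : 2*N1*N2*(G11*(2*G12*N2)^2 + 2*G12*(2*G12*N2)*((G22*N1 - G11*N2) - D)
            + G22*((G22*N1 - G11*N2) - D)^2)
          = (T - D)*(N1*(2*G12*N2)^2 + N2*((G22*N1 - G11*N2) - D)^2) := by
        rw [hT]
        linear_combination (N2*(G11*N2 - G22*N1 + D)) * hDsq
      have hscaled := mul_le_mul_of_nonneg_left hinst (le_of_lt (by positivity : (0:ℝ) < 2*N1*N2))
      have h3 : (2*t*N1*N2)*(N1*(2*G12*N2)^2 + N2*((G22*N1 - G11*N2) - D)^2)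
          ≤ (T - D)*(N1*(2*G12*N2)^2 + N2*((G22*N1 - G11*N2) - D)^2) := by
        nlinarith [hscaled, hid]
      exact (mul_le_mul_iff_left₀ hKpos).mp h3
  have hcrux : a*T ≤ D*(s+a) := by
    have h1 : (a*T)^2 ≤ (D*(s+a))^2 := by
      have : (D*(s+a))^2 = DD*(s+a)^2 := by rw [← hDsq]; ring
      rw [this]
      calc (a*T)^2 = a^2*T^2 := by ring
        _ ≤ DD*(s+a)^2 := by rw [hT, hDD]; exact hcrux2
    nlinarith [h1, hD0, ha, hs, mul_nonneg hD0 (by linarith : (0:ℝ) ≤ s+a)]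
  have p1 : (T + D)*s ≤ (2*u*N1*N2)*s := mul_le_mul_of_nonneg_right hmax hs.le
  have p2 : (2*t*N1*N2)*(s+2*a) ≤ (T - D)*(s+2*a) :=
    mul_le_mul_of_nonneg_right hmin (by linarith)
  have key : (0:ℝ) ≤ 2*(N1*N2)*((u - t)*s - 2*t*a) := by nlinarith [p1, p2, hcrux]
  nlinarith [key, mul_pos hN1 hN2]


lemma core (a b s W1 W2 t u : ℝ) (ha : 1 ≤ a) (hab : a ≤ b) (hs : 1 ≤ s)
    (hW1 : 0 ≤ W1) (hW2 : 0 ≤ W2) (ht : 0 ≤ t)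
    (hlow : ∀ α β : ℝ, t*(α^2*(a*b*(a+b)) + β^2*(s*(a+b)*(a+b+s))) ≤
      (α*b+β*(a+b+s))^2*W1 + (α*a-β*(a+b+s))^2*W2)
    (hup : ∀ α β : ℝ, (α*b+β*(a+b+s))^2*W1 + (α*a-β*(a+b+s))^2*W2 ≤
      u*(α^2*(a*b*(a+b)) + β^2*(s*(a+b)*(a+b+s)))) :
    2*t*a ≤ (u - t)*s := by
  have ha0 : (0:ℝ) < a := by linarith
  have hb0 : (0:ℝ) < b := by linarith
  have hs0 : (0:ℝ) < s := by linarith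
  have hR : (0:ℝ) ≤ 1*b^2*s^3*W1^2 + -2*a*b*s^3*W1*W2 + -2*a*b^2*s^2*W1*W2 + 4*a*b^2*s^2*W1^2 + 1*a^2*s^3*W2^2 + 2*a^2*b*s^2*W2^2 + -6*a^2*b*s^2*W1*W2 + 1*a^2*b^2*s*W2^2 + -2*a^2*b^2*s*W1*W2 + 5*a^2*b^2*s*W1^2 + 2*a^3*s^2*W2^2 + 4*a^3*b*s*W2^2 + -8*a^3*b*s*W1*W2 + 2*a^3*b^2*W2^2 + 2*a^3*b^2*W1^2 + -4*a^4*b*W1*W2 := by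
    have hd : (0:ℝ) ≤ b - a := by linarith
    have hdisc : (0:ℝ) ≤ (16*a^3*s^4)*(b-a)^3 + (16*a^3*s^3)*(b-a)^4 + (32*a^4*s^4)*(b-a)^2 + (112*a^4*s^3)*(b-a)^3 + (48*a^4*s^2)*(b-a)^4 + (16*a^5*s^4)*(b-a) + (176*a^5*s^3)*(b-a)^2 + (240*a^5*s^2)*(b-a)^3 + (48*a^5*s)*(b-a)^4 + (80*a^6*s^3)*(b-a) + (336*a^6*s^2)*(b-a)^2 + (208*a^6*s)*(b-a)^3 + (16*a^6)*(b-a)^4 + (144*a^7*s^2)*(b-a) + (272*a^7*s)*(b-a)^2 + (64*a^7)*(b-a)^3 + (112*a^8*s)*(b-a) + (80*a^8)*(b-a)^2 + (32*a^9)*(b-a) := (add_nonneg (add_nonneg (add_nonneg (add_nonneg (add_nonneg (add_nonneg (add_nonneg (add_nonneg (add_nonneg (add_nonneg (add_nonneg (add_nonneg (add_nonneg (add_nonneg (add_nonneg (add_nonneg (add_nonneg (add_nonneg (mul_nonneg (by positivity) (pow_nonneg hd 3)) (mul_nonneg (by positivity) (pow_nonneg hd 4))) (mul_nonneg (by positivity)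 (pow_nonneg hd 2))) (mul_nonneg (by positivity) (pow_nonneg hd 3))) (mul_nonneg (by positivity) (pow_nonneg hd 4))) (mul_nonneg (by positivity) hd)) (mul_nonneg (by positivity) (pow_nonneg hd 2))) (mul_nonneg (by positivity) (pow_nonneg hd 3))) (mul_nonneg (by positivity) (pow_nonneg hd 4))) (mul_nonneg (by positivity) hd)) (mul_nonneg (by positivity) (pow_nonneg hd 2))) (mul_nonneg (by positivity) (pow_nonneg hd 3))) (mul_nonneg (by positivity) (pow_nonneg hd 4))) (mul_nonneg (by positivity) hd)) (mul_nonneg (by positivity) (pow_nonneg hd 2))) (mul_nonneg (by positivity) (pow_nonneg hd 3))) (mul_nonneg (by positivity) hd)) (mul_nonneg (by positivity) (pow_nonneg hd 2))) (mul_nonneg (by positivity) hd))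
    have hdisc' : (0:ℝ) ≤ 4*(1*b^2*s^3 + 4*a*b^2*s^2 + 5*a^2*b^2*s + 2*a^3*b^2)*(1*a^2*s^3 + 2*a^2*b*s^2 + 1*a^2*b^2*s + 2*a^3*s^2 + 4*a^3*b*s + 2*a^3*b^2) - (-2*a*b*s^3 + -2*a*b^2*s^2 + -6*a^2*b*s^2 + -2*a^2*b^2*s + -8*a^3*b*s + -4*a^4*b)^2 := by
      have e : 4*(1*b^2*s^3 + 4*a*b^2*s^2 + 5*a^2*b^2*s + 2*a^3*b^2)*(1*a^2*s^3 + 2*a^2*b*s^2 + 1*a^2*b^2*s + 2*a^3*s^2 + 4*a^3*b*s + 2*a^3*b^2) - (-2*a*b*s^3 + -2*a*b^2*s^2 + -6*a^2*b*s^2 + -2*a^2*b^2*s + -8*a^3*b*s + -4*a^4*b)^2 = (16*a^3*s^4)*(b-a)^3 + (16*a^3*s^3)*(b-a)^4 + (32*a^4*s^4)*(b-a)^2 + (112*a^4*s^3)*(b-a)^3 + (48*a^4*s^2)*(b-a)^4 + (16*a^5*s^4)*(b-a) + (176*a^5*s^3)*(b-a)^2 + (240*a^5*s^2)*(b-a)^3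 + (48*a^5*s)*(b-a)^4 + (80*a^6*s^3)*(b-a) + (336*a^6*s^2)*(b-a)^2 + (208*a^6*s)*(b-a)^3 + (16*a^6)*(b-a)^4 + (144*a^7*s^2)*(b-a) + (272*a^7*s)*(b-a)^2 + (64*a^7)*(b-a)^3 + (112*a^8*s)*(b-a) + (80*a^8)*(b-a)^2 + (32*a^9)*(b-a) := by ring
      rw [e]; exact hdisc
    have hr11pos : (0:ℝ) < 1*b^2*s^3 + 4*a*b^2*s^2 + 5*a^2*b^2*s + 2*a^3*b^2 := by positivity
    have hid4 : 4*(1*b^2*s^3 + 4*a*b^2*s^2 + 5*a^2*b^2*s + 2*a^3*b^2)*(1*b^2*s^3*W1^2 + -2*a*b*s^3*W1*W2 + -2*a*b^2*s^2*W1*W2 + 4*a*b^2*s^2*W1^2 + 1*a^2*s^3*W2^2 + 2*a^2*b*s^2*W2^2 + -6*a^2*b*s^2*W1*W2 + 1*a^2*b^2*s*W2^2 + -2*a^2*b^2*s*W1*W2 + 5*a^2*b^2*s*W1^2 + 2*a^3*s^2*W2^2 + 4*a^3*b*s*W2^2 + -8*a^3*b*s*W1*W2 + 2*a^3*b^2*W2^2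 + 2*a^3*b^2*W1^2 + -4*a^4*b*W1*W2)
        = (2*(1*b^2*s^3 + 4*a*b^2*s^2 + 5*a^2*b^2*s + 2*a^3*b^2)*W1 + (-2*a*b*s^3 + -2*a*b^2*s^2 + -6*a^2*b*s^2 + -2*a^2*b^2*s + -8*a^3*b*s + -4*a^4*b)*W2)^2 + (4*(1*b^2*s^3 + 4*a*b^2*s^2 + 5*a^2*b^2*s + 2*a^3*b^2)*(1*a^2*s^3 + 2*a^2*b*s^2 + 1*a^2*b^2*s + 2*a^3*s^2 + 4*a^3*b*s + 2*a^3*b^2) - (-2*a*b*s^3 + -2*a*b^2*s^2 + -6*a^2*b*s^2 + -2*a^2*b^2*s + -8*a^3*b*s + -4*a^4*b)^2)*W2^2 := by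
      ring
    nlinarith [hid4, hr11pos, sq_nonneg (2*(1*b^2*s^3 + 4*a*b^2*s^2 + 5*a^2*b^2*s + 2*a^3*b^2)*W1 + (-2*a*b*s^3 + -2*a*b^2*s^2 + -6*a^2*b*s^2 + -2*a^2*b^2*s + -8*a^3*b*s + -4*a^4*b)*W2), mul_nonneg hdisc' (sq_nonneg W2)]
  refine pencil (a*b*(a+b)) (s*(a+b)*(a+b+s)) (b^2*W1 + a^2*W2) ((a+b+s)^2*(W1+W2))
      ((a+b+s)*(b*W1 - a*W2)) t u s a (by positivity) (by positivity) ha0 hs0 ht ?_ ?_ ?_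
  · intro α β
    have h := hlow α β
    linarith [h]
  · intro α β
    have h := hup α β
    linarith [h]
  · have e : (((b^2*W1 + a^2*W2)*(s*(a+b)*(a+b+s))-((a+b+s)^2*(W1+W2))*(a*b*(a+b)))^2
        + 4*((a+b+s)*(b*W1 - a*W2))^2*(a*b*(a+b))*(s*(a+b)*(a+b+s)))*(s+a)^2
        - a^2*((b^2*W1 + a^2*W2)*(s*(a+b)*(a+b+s))+((a+b+s)^2*(W1+W2))*(a*b*(a+b)))^2
        = (a+b)^4*(a+b+s)^2*s*(1*b^2*s^3*W1^2 + -2*a*b*s^3*W1*W2 + -2*a*b^2*s^2*W1*W2 + 4*a*b^2*s^2*W1^2 + 1*a^2*s^3*W2^2 + 2*a^2*b*s^2*W2^2 + -6*a^2*b*s^2*W1*W2 + 1*a^2*b^2*s*W2^2 + -2*a^2*b^2*s*W1*W2 + 5*a^2*b^2*s*W1^2 + 2*a^3*s^2*W2^2 + 4*a^3*b*s*W2^2 + -8*a^3*b*s*W1*W2 + 2*a^3*b^2*W2^2 + 2*a^3*b^2*W1^2 + -4*a^4*b*W1*W2) := by ring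
    linarith [e, mul_nonneg (mul_nonneg (mul_nonneg (by positivity : (0:ℝ) ≤ (a+b)^4)
      (by positivity : (0:ℝ) ≤ (a+b+s)^2)) hs0.le) hR]


/-- **Lemma 2.1 (second inequality, Gu and Liu).** Let `G` be a graph with `n ≥ 2` vertices
and at least one edge, with Laplacian eigenvalues `μ 0 ≥ μ 1 ≥ … ≥ μ (n-1) = 0` (so
`μ_1 = μ 0` and `μ_{n-1} = μ (n-2)` in the paper's notation).  Let `S ⊆ V(G)`, and let `X`
and `Y` be disjoint nonempty vertex subsets with `X ∪ Y = V(G) ∖ S`, no edge between `X`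
and `Y`, and `|X| ≤ |Y|`.  Then `(μ_1 − μ_{n-1})·|S| ≥ 2·μ_{n-1}·|X|`. -/
theorem stmt5 {n : ℕ} (hn : 2 ≤ n)
    (G : SimpleGraph (Fin n)) [DecidableRel G.Adj]
    (hedge : G.edgeSet.Nonempty)
    (μ : Fin n → ℝ) (hmono : Antitone μ)
    (hlist : ∃ e : Fin n ≃ Fin n,
      ∀ i, (SimpleGraph.posSemidef_lapMatrix ℝ G).isHermitian.eigenvalues i = μ (e i))
    (hlast : μ ⟨n - 1, by omega⟩ = 0)
    (S X Y : Finset (Fin n))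
    (hXY : Disjoint X Y) (hX : X.Nonempty) (hY : Y.Nonempty)
    (hunion : X ∪ Y = Sᶜ)
    (hnoedge : ∀ x ∈ X, ∀ y ∈ Y, ¬ G.Adj x y)
    (hcard : X.card ≤ Y.card) :
    2 * μ ⟨n - 2, by omega⟩ * X.card ≤ (μ ⟨0, by omega⟩ - μ ⟨n - 2, by omega⟩) * S.card := by
  classical
  obtain ⟨e, he⟩ := hlist
  have hA := (SimpleGraph.posSemidef_lapMatrix ℝ G).isHermitian
  set τ : ℝ := μ ⟨n - 2, by omega⟩ with hτdef
  set μ1 : ℝ := μ ⟨0, by omega⟩ with hμ1def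
  -- membership trichotomy
  have htri : ∀ v : Fin n, (v ∈ X ∧ v ∉ Y ∧ v ∉ S) ∨ (v ∈ Y ∧ v ∉ X ∧ v ∉ S) ∨
      (v ∈ S ∧ v ∉ X ∧ v ∉ Y) := by
    intro v
    by_cases hvS : v ∈ S
    · refine Or.inr (Or.inr ⟨hvS, ?_, ?_⟩) <;> intro hmem
      · have : v ∈ X ∪ Y := Finset.mem_union_left _ hmem
        rw [hunion, Finset.mem_compl] at this; exact this hvS
      · have : v ∈ X ∪ Y := Finset.mem_union_right _ hmem
        rw [hunion, Finset.mem_compl] at this; exact this hvS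
    · have : v ∈ X ∪ Y := by rw [hunion, Finset.mem_compl]; exact hvS
      rcases Finset.mem_union.mp this with hvX | hvY
      · exact Or.inl ⟨hvX, Finset.disjoint_left.mp hXY hvX, hvS⟩
      · exact Or.inr (Or.inl ⟨hvY, Finset.disjoint_right.mp hXY hvY, hvS⟩)
  -- cardinalities
  have hcardn : X.card + Y.card + S.card = n := by
    have h1 : (X ∪ Y).card = X.card + Y.card := Finset.card_union_of_disjoint hXY
    have h2 : (X ∪ Y).card = n - S.card := by
      rw [hunion, Finset.card_compl, Fintype.card_fin]
    have h3 : S.card ≤ n := by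
      have := Finset.card_le_card (Finset.subset_univ S)
      simpa using this
    omega
  set a : ℝ := (X.card : ℝ) with hadef
  set b : ℝ := (Y.card : ℝ) with hbdef
  set s : ℝ := (S.card : ℝ) with hsdef
  have ha1 : 1 ≤ a := by
    rw [hadef]; exact_mod_cast hX.card_pos
  have hab : a ≤ b := by rw [hadef, hbdef]; exact_mod_cast hcard
  have hs0 : 0 ≤ s := by rw [hsdef]; positivity
  set W1 : ℝ := ∑ i : Fin n, ∑ j : Fin n, if G.Adj i j ∧ i ∈ X ∧ j ∈ S then 1 else 0 with hW1def
  set W2 : ℝ := ∑ i : Fin n, ∑ j : Fin n, if G.Adj i j ∧ i ∈ Y ∧ j ∈ S then 1 else 0 with hW2def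
  have hW1nn : 0 ≤ W1 := by
    rw [hW1def]
    refine Finset.sum_nonneg fun i _ => Finset.sum_nonneg fun j _ => ?_
    split <;> norm_num
  have hW2nn : 0 ≤ W2 := by
    rw [hW2def]
    refine Finset.sum_nonneg fun i _ => Finset.sum_nonneg fun j _ => ?_
    split <;> norm_num
  -- test vectors
  set f : ℝ → ℝ → (Fin n → ℝ) :=
    fun α β v => if v ∈ X then α*b+β*s else if v ∈ Y then -(α*a)+β*s else -(β*(a+b)) with hfdef
  have hfX : ∀ (α β : ℝ) v, v ∈ X → f α β v = α*b+β*s := by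
    intro α β v hv; rw [hfdef]; simp [hv]
  have hfY : ∀ (α β : ℝ) v, v ∈ Y → f α β v = -(α*a)+β*s := by
    intro α β v hv
    rcases htri v with ⟨h1,h2,h3⟩|⟨h1,h2,h3⟩|⟨h1,h2,h3⟩
    · exact absurd hv h2
    · rw [hfdef]; simp [h1, h2]
    · exact absurd hv h3
  have hfS : ∀ (α β : ℝ) v, v ∈ S → f α β v = -(β*(a+b)) := by
    intro α β v hv
    rcases htri v with ⟨h1,h2,h3⟩|⟨h1,h2,h3⟩|⟨h1,h2,h3⟩
    · exact absurd hv h3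
    · exact absurd hv h3
    · rw [hfdef]; simp [h2, h3]
  -- splitting sums
  have hsplit : ∀ g : Fin n → ℝ, ∑ v, g v = ∑ v ∈ X, g v + ∑ v ∈ Y, g v + ∑ v ∈ S, g v := by
    intro g
    have h1 : X ∪ Y ∪ S = Finset.univ := by
      rw [hunion]
      ext v; simp only [Finset.mem_union, Finset.mem_compl, Finset.mem_univ, iff_true]
      tauto
    have hd2 : Disjoint (X ∪ Y) S := by rw [hunion]; exact disjoint_compl_left
    rw [← h1, Finset.sum_union hd2, Finset.sum_union hXY]
  have hSum : ∀ α β : ℝ, ∑ v, f α β v = 0 := by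
    intro α β
    rw [hsplit]
    have e1 : ∑ v ∈ X, f α β v = ∑ v ∈ X, (α*b+β*s) :=
      Finset.sum_congr rfl (fun v hv => hfX α β v hv)
    have e2 : ∑ v ∈ Y, f α β v = ∑ v ∈ Y, (-(α*a)+β*s) :=
      Finset.sum_congr rfl (fun v hv => hfY α β v hv)
    have e3 : ∑ v ∈ S, f α β v = ∑ v ∈ S, (-(β*(a+b))) :=
      Finset.sum_congr rfl (fun v hv => hfS α β v hv)
    rw [e1, e2, e3]
    simp only [Finset.sum_const, nsmul_eq_mul]
    rw [← hadef, ← hbdef, ← hsdef]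
    ring
  have hNorm : ∀ α β : ℝ, (f α β) ⬝ᵥ (f α β) =
      α^2*(a*b*(a+b)) + β^2*(s*(a+b)*(a+b+s)) := by
    intro α β
    have : (f α β) ⬝ᵥ (f α β) = ∑ v, (f α β v)^2 := by
      simp [dotProduct, pow_two]
    rw [this, hsplit]
    have e1 : ∑ v ∈ X, (f α β v)^2 = ∑ v ∈ X, (α*b+β*s)^2 :=
      Finset.sum_congr rfl (fun v hv => by rw [hfX α β v hv])
    have e2 : ∑ v ∈ Y, (f α β v)^2 = ∑ v ∈ Y, (-(α*a)+β*s)^2 :=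
      Finset.sum_congr rfl (fun v hv => by rw [hfY α β v hv])
    have e3 : ∑ v ∈ S, (f α β v)^2 = ∑ v ∈ S, (-(β*(a+b)))^2 :=
      Finset.sum_congr rfl (fun v hv => by rw [hfS α β v hv])
    rw [e1, e2, e3]
    simp only [Finset.sum_const, nsmul_eq_mul]
    rw [← hadef, ← hbdef, ← hsdef]
    ring
  -- quadratic form computation
  have hsym1 : (∑ i : Fin n, ∑ j : Fin n, if G.Adj i j ∧ i ∈ S ∧ j ∈ X then (1:ℝ) else 0) = W1 := by
    rw [hW1def, Finset.sum_comm]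
    refine Finset.sum_congr rfl fun i _ => Finset.sum_congr rfl fun j _ => ?_
    exact if_congr (by rw [G.adj_comm]; tauto) rfl rfl
  have hsym2 : (∑ i : Fin n, ∑ j : Fin n, if G.Adj i j ∧ i ∈ S ∧ j ∈ Y then (1:ℝ) else 0) = W2 := by
    rw [hW2def, Finset.sum_comm]
    refine Finset.sum_congr rfl fun i _ => Finset.sum_congr rfl fun j _ => ?_
    exact if_congr (by rw [G.adj_comm]; tauto) rfl rfl
  have hpt : ∀ (α β : ℝ) (i j : Fin n),
      (if G.Adj i j then (f α β i - f α β j)^2 else 0) =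
        (α*b+β*(a+b+s))^2 * ((if G.Adj i j ∧ i ∈ X ∧ j ∈ S then (1:ℝ) else 0)
          + (if G.Adj i j ∧ i ∈ S ∧ j ∈ X then 1 else 0))
        + (α*a-β*(a+b+s))^2 * ((if G.Adj i j ∧ i ∈ Y ∧ j ∈ S then 1 else 0)
          + (if G.Adj i j ∧ i ∈ S ∧ j ∈ Y then 1 else 0)) := by
    intro α β i j
    by_cases hadj : G.Adj i j
    · rcases htri i with ⟨hi1,hi2,hi3⟩|⟨hi1,hi2,hi3⟩|⟨hi1,hi2,hi3⟩ <;>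
        rcases htri j with ⟨hj1,hj2,hj3⟩|⟨hj1,hj2,hj3⟩|⟨hj1,hj2,hj3⟩
      · rw [hfX α β i hi1, hfX α β j hj1]
        simp [hadj, hi1, hi2, hi3, hj1, hj2, hj3]
      · exact absurd hadj (hnoedge i hi1 j hj1)
      · rw [hfX α β i hi1, hfS α β j hj1]
        simp [hadj, hi1, hi2, hi3, hj1, hj2, hj3]
        ring
      · exact absurd (G.adj_symm hadj) (hnoedge j hj1 i hi1)
      · rw [hfY α β i hi1, hfY α β j hj1]
        simp [hadj, hi1, hi2, hi3, hj1, hj2, hj3]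
      · rw [hfY α β i hi1, hfS α β j hj1]
        simp [hadj, hi1, hi2, hi3, hj1, hj2, hj3]
        ring
      · rw [hfS α β i hi1, hfX α β j hj1]
        simp [hadj, hi1, hi2, hi3, hj1, hj2, hj3]
        ring
      · rw [hfS α β i hi1, hfY α β j hj1]
        simp [hadj, hi1, hi2, hi3, hj1, hj2, hj3]
        ring
      · rw [hfS α β i hi1, hfS α β j hj1]
        simp [hadj, hi1, hi2, hi3, hj1, hj2, hj3]
    · simp [hadj]
  have hQ : ∀ α β : ℝ, (f α β) ⬝ᵥ (G.lapMatrix ℝ *ᵥ f α β) =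
      (α*b+β*(a+b+s))^2*W1 + (α*a-β*(a+b+s))^2*W2 := by
    intro α β
    have h0 : (f α β) ⬝ᵥ (G.lapMatrix ℝ *ᵥ f α β) =
        (∑ i : Fin n, ∑ j : Fin n, if G.Adj i j then (f α β i - f α β j)^2 else 0)/2 := by
      rw [← Matrix.toLinearMap₂'_apply', SimpleGraph.lapMatrix_toLinearMap₂']
    rw [h0]
    have h1 : (∑ i : Fin n, ∑ j : Fin n, if G.Adj i j then (f α β i - f α β j)^2 else 0)
        = ∑ i : Fin n, ∑ j : Fin n,
          ((α*b+β*(a+b+s))^2 * ((if G.Adj i j ∧ i ∈ X ∧ j ∈ S then (1:ℝ) else 0)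
            + (if G.Adj i j ∧ i ∈ S ∧ j ∈ X then 1 else 0))
          + (α*a-β*(a+b+s))^2 * ((if G.Adj i j ∧ i ∈ Y ∧ j ∈ S then 1 else 0)
            + (if G.Adj i j ∧ i ∈ S ∧ j ∈ Y then 1 else 0))) :=
      Finset.sum_congr rfl fun i _ => Finset.sum_congr rfl fun j _ => hpt α β i j
    rw [h1]
    simp only [Finset.sum_add_distrib, ← Finset.mul_sum]
    rw [hsym1, hsym2, ← hW1def, ← hW2def]
    ring
  -- eigenvalue facts
  have hτ0 : 0 ≤ τ := by
    rw [hτdef, ← hlast]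
    exact hmono (by rw [Fin.mk_le_mk]; omega)
  have hupall : ∀ i, hA.eigenvalues i ≤ μ1 := by
    intro i; rw [he i, hμ1def]
    exact hmono (by rw [Fin.le_def]; exact Nat.zero_le _)
  set i0 := e.symm ⟨n-1, by omega⟩ with hi0def
  have hi0 : hA.eigenvalues i0 = 0 := by
    rw [he i0, hi0def, Equiv.apply_symm_apply, hlast]
  have hoth : ∀ i, i ≠ i0 → τ ≤ hA.eigenvalues i := by
    intro i hne
    rw [he i, hτdef]
    apply hmono
    rw [Fin.le_def]
    have h1 : (e i : ℕ) < n := (e i).isLt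
    have h2 : (e i : ℕ) ≠ n - 1 := by
      intro h
      apply hne
      have hei : e i = ⟨n-1, by omega⟩ := Fin.ext h
      rw [hi0def, ← hei, Equiv.symm_apply_apply]
    simp only
    omega
  have hker : G.lapMatrix ℝ *ᵥ (fun _ => (1:ℝ)) = 0 := G.lapMatrix_mulVec_const_eq_zero
  have hlowQ : ∀ α β : ℝ, τ*(α^2*(a*b*(a+b)) + β^2*(s*(a+b)*(a+b+s))) ≤
      (α*b+β*(a+b+s))^2*W1 + (α*a-β*(a+b+s))^2*W2 := by
    intro α β
    have h := ray_lower (G.lapMatrix ℝ) hA τ i0 hτ0 hi0 hoth hker (f α β) (hSum α β)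
    rw [hNorm α β, hQ α β] at h
    exact h
  have hupQ : ∀ α β : ℝ, (α*b+β*(a+b+s))^2*W1 + (α*a-β*(a+b+s))^2*W2 ≤
      μ1*(α^2*(a*b*(a+b)) + β^2*(s*(a+b)*(a+b+s))) := by
    intro α β
    have h := ray_upper (G.lapMatrix ℝ) hA μ1 hupall (f α β)
    rw [hNorm α β, hQ α β] at h
    exact h
  by_cases hSempty : S.card = 0
  · have hSe : S = ∅ := Finset.card_eq_zero.mp hSempty
    have hW1z : W1 = 0 := by
      rw [hW1def]
      refine Finset.sum_eq_zero fun i _ => Finset.sum_eq_zero fun j _ => ?_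
      simp [hSe]
    have hW2z : W2 = 0 := by
      rw [hW2def]
      refine Finset.sum_eq_zero fun i _ => Finset.sum_eq_zero fun j _ => ?_
      simp [hSe]
    have h10 := hlowQ 1 0
    rw [hW1z, hW2z] at h10
    have hb1 : (1:ℝ) ≤ b := le_trans ha1 hab
    have hN1pos : (0:ℝ) < a*b*(a+b) := by nlinarith
    have hτle : τ ≤ 0 := by nlinarith [h10, hN1pos]
    have hτeq : τ = 0 := le_antisymm hτle hτ0
    rw [hτeq, hsdef, hSempty]
    norm_num
  · have hs1 : 1 ≤ s := by
      rw [hsdef]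
      exact_mod_cast Nat.one_le_iff_ne_zero.mpr hSempty
    have hfin := core a b s W1 W2 τ μ1 ha1 hab hs1 hW1nn hW2nn hτ0 hlowQ hupQ
    linarith [hfin]
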